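/- Define ≲ on G = GL(n,ℤ) by a ≲ ab iff for all x ∈ ℤⁿ: 0 < x and 0 < xab imply 0 < xa (lexicographic order). Then a ~ ab (i.e., a ≲ ab and ab ≲ a) holds if and only if b ∈ H, where H is the subgroup of G of elements preserving the lexicographic order on ℤⁿ (upper triangular integer matrices with diagonal entries +1). -/

import Mathlib

/-- `x > 0` in the standard lexicographic order on `ℤⁿ`. -/
def lexPos {n : ℕ} (x : Fin n → ℤ) : Prop :=
  ∃ i, (∀ j, j < i → x j = 0) ∧ 0 < x i

/-- `a ≲ c` (for `c = ab`): for all `x`, `0 < x` and `0 < xc` imply `0 < xa`. -/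
def Lesim {n : ℕ} (a c : Matrix.GeneralLinearGroup (Fin n) ℤ) : Prop :=
  ∀ x : Fin n → ℤ, lexPos x →
    lexPos (Matrix.vecMul x (c : Matrix (Fin n) (Fin n) ℤ)) →
    lexPos (Matrix.vecMul x (a : Matrix (Fin n) (Fin n) ℤ))

/-!
The lexicographic order makes `ℤⁿ` a linearly ordered group, so a nonzero vector is either
positive or has positive negative. For positive `x`, `a ∼ ab` says exactly that `xa` and `xab`
are positive together; as `x ↦ xa` and `x ↦ xab` are injective and commute with negation, this
extends to all `x`. Since `a` is invertible, `y = xa` ranges over all of `ℤⁿ`, and `xab = yb`.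
-/

open Matrix

theorem lexPos_iff_pos_toLex {n : ℕ} (x : Fin n → ℤ) : lexPos x ↔ 0 < toLex x := by
  simp only [lexPos, eq_comm (a := x _)]
  rfl

theorem not_lexPos_zero {n : ℕ} : ¬ lexPos (0 : Fin n → ℤ) := by
  rw [lexPos_iff_pos_toLex]
  exact lt_irrefl _

theorem lexPos_neg_iff {n : ℕ} {x : Fin n → ℤ} (hx : x ≠ 0) :
    lexPos (-x) ↔ ¬ lexPos x := by
  rw [lexPos_iff_pos_toLex, lexPos_iff_pos_toLex, toLex_neg, neg_pos]
  have hx' : toLex x ≠ 0 := hx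
  exact ⟨fun hneg hpos => lt_asymm hneg hpos, fun h => hx'.lt_or_gt.resolve_right h⟩

theorem lesim_and_lesim_iff {n : ℕ} {a c : GL (Fin n) ℤ} :
    Lesim a c ∧ Lesim c a ↔ ∀ x, lexPos x →
      (lexPos (x ᵥ* (a : Matrix (Fin n) (Fin n) ℤ)) ↔
        lexPos (x ᵥ* (c : Matrix (Fin n) (Fin n) ℤ))) := by
  constructor
  · rintro ⟨hac, hca⟩ x hx
    exact ⟨hca x hx, hac x hx⟩
  · intro h
    exact ⟨fun x hx => (h x hx).2, fun x hx => (h x hx).1⟩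

theorem lexPos_vecMul_iff_of_forall_lexPos {m n : ℕ} {M N : Matrix (Fin m) (Fin n) ℤ}
    (hM : Function.Injective M.vecMul) (hN : Function.Injective N.vecMul)
    (h : ∀ x, lexPos x → (lexPos (x ᵥ* M) ↔ lexPos (x ᵥ* N))) (x : Fin m → ℤ) :
    lexPos (x ᵥ* M) ↔ lexPos (x ᵥ* N) := by
  rcases eq_or_ne x 0 with rfl | hx
  · simp [not_lexPos_zero]
  by_cases hpos : lexPos x
  · exact h x hpos
  have hxM : x ᵥ* M ≠ 0 := (hM.ne hx).trans_eq (zero_vecMul M)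
  have hxN : x ᵥ* N ≠ 0 := (hN.ne hx).trans_eq (zero_vecMul N)
  simpa only [neg_vecMul, lexPos_neg_iff hxM, lexPos_neg_iff hxN, not_iff_not] using
    h (-x) ((lexPos_neg_iff hx).2 hpos)

/-- `a ∼ ab` (i.e. `a ≲ ab` and `ab ≲ a`) iff `b` preserves the
lexicographic order on `ℤⁿ`. -/
theorem stmt9 {n : ℕ} (a b : Matrix.GeneralLinearGroup (Fin n) ℤ) :
    (Lesim a (a * b) ∧ Lesim (a * b) a) ↔
      (∀ x : Fin n → ℤ,
        lexPos x ↔ lexPos (Matrix.vecMul x (b : Matrix (Fin n) (Fin n) ℤ))) := by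
  rw [lesim_and_lesim_iff]
  constructor
  · intro h
    rw [(vecMul_surjective_iff_isUnit.2 a.isUnit).forall]
    intro x
    rw [vecMul_vecMul, ← Units.val_mul]
    exact lexPos_vecMul_iff_of_forall_lexPos (vecMul_injective_of_isUnit a.isUnit)
      (vecMul_injective_of_isUnit (a * b).isUnit) h x
  · intro hb x _
    rw [Units.val_mul, ← vecMul_vecMul]
    exact hb _
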